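/- Suppose f + 1 = λm and let χ be a multiplicative character of order m on F_q. Then M_{q,m} is a (q, f + 1, λ)-difference set in F_q if and only if Σ_{t=1, t≠s}^{m−1} χ^t(−1) G_q(χ^t) G_q(χ^{s−t}) = (1 − m)(1 + χ^s(−1)) G_q(χ^s) for every s = 1, ..., m − 1. -/

import Mathlib

/-- `D` is a `(q, k, l)`-difference set in the additive group `F` (with `q = |F|`). -/
def IsDiffSet {F : Type*} [AddGroup F] (D : Set F) (k l : ℕ) : Prop :=
  D.ncard = k ∧
    ∀ a : F, a ≠ 0 → {x : F × F | x.1 ∈ D ∧ x.2 ∈ D ∧ x.1 - x.2 = a}.ncard = l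

/-- The set of nonzero `m`-th powers in `F`. -/
def Hset (F : Type*) [Field F] (m : ℕ) : Set F :=
  {x : F | x ≠ 0 ∧ ∃ y : F, y ^ m = x}

/-- The set of `m`-th powers in `F`, including `0`. -/
def Mset (F : Type*) [Field F] (m : ℕ) : Set F :=
  Hset F m ∪ {0}

/-- The Gauss sum `G_q(χ) = ∑ α ∈ F_q, χ(α) ζ_p^{Tr(α)}`, where `Tr` is the trace map
from `F_q` to `F_p` and `ζ_p = e^{2πi/p}`. -/
noncomputable def Gsum (p : ℕ) (F : Type*) [Field F] [Fintype F] [Algebra (ZMod p) F]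
    (χ : MulChar F ℂ) : ℂ :=
  ∑ α : F, χ α *
    Complex.exp (2 * Real.pi * Complex.I * ((Algebra.trace (ZMod p) F α).val : ℂ) / p)

/-!
Let `ψ` be the canonical additive character `x ↦ ζ_p ^ Tr x`, `M = M_{q,m}` and
`S(c) = ∑_{x ∈ M} ψ(c x)`. Fourier inversion on `F_q` shows that `M` is a difference set with
parameter `λ` iff `S(c) S(-c) = |M| - λ` for all `c ≠ 0`.

The characters `η` of the group `⟨χ⟩` detect `m`-th powers: `∑_η η(x) = m · 1_{H_{q,m}}(x)`
(Mathlib's trivial character vanishes at `0`). Hence `m S(c) = m + ∑_η η⁻¹(c) G(η)`, and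
multiplying out gives `m² S(c) S(-c) = m² + ∑_ν ν⁻¹(c) B(ν)` with
`B(ν) = m (1 + ν(-1)) G(ν) + ∑_η η(-1) G(η) G(ν η⁻¹)`. Because `η(-1) G(η) G(η⁻¹) = q` for
`η ≠ 1`, the constant coefficient `B(1)` is exactly what the difference-set condition requires,
so by orthogonality of characters on `F_q^×` the condition says `B(ν) = 0` for `ν ≠ 1`. For
`ν = χ^s` the terms `t = 0` and `t = s` of the inner sum, where `G(1) = -1`, turn `m` into
`m - 1`, giving the stated identity.
-/

open Finset

section ZPowers

variable {G : Type*} [Group G] {x : G}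

lemma sum_zpowers_eq_sum_range {M : Type*} [AddCommMonoid M] (hx : IsOfFinOrder x)
    [Fintype (Subgroup.zpowers x)] (g : G → M) :
    ∑ y : Subgroup.zpowers x, g y = ∑ t ∈ range (orderOf x), g (x ^ t) := by
  rw [← Fin.sum_univ_eq_sum_range (fun t => g (x ^ t))]
  exact (Fintype.sum_equiv (finEquivZPowers hx) _ _ fun i => by rw [finEquivZPowers_apply]).symm

lemma forall_zpowers_ne_one_iff (hx : IsOfFinOrder x) (P : G → Prop) :
    (∀ y : Subgroup.zpowers x, y ≠ 1 → P y) ↔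
      ∀ s, 1 ≤ s → s ≤ orderOf x - 1 → P (x ^ s) := by
  have hpos := hx.orderOf_pos
  constructor
  · intro h s hs1 hs2
    refine h ⟨x ^ s, Subgroup.npow_mem_zpowers x s⟩ fun h1 => ?_
    exact pow_ne_one_of_lt_orderOf (by omega) (by omega) (congrArg Subtype.val h1)
  · intro h y hy
    obtain ⟨i, rfl⟩ := (finEquivZPowers hx).surjective y
    have hi : (i : ℕ) ≠ 0 := fun hi => hy (by ext; simp [finEquivZPowers_apply, hi])
    simpa [finEquivZPowers_apply] using h i (by omega) (by omega)

lemma card_zpowers_eq_orderOf [Fintype (Subgroup.zpowers x)] :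
    Fintype.card (Subgroup.zpowers x) = orderOf x := by
  rw [← Nat.card_eq_fintype_card, Nat.card_zpowers]

end ZPowers

section DifferenceSets

variable {R : Type*} [CommRing R] [DecidableEq R]

def diffCount (D : Finset R) (a : R) : ℕ := #{z ∈ D ×ˢ D | z.1 - z.2 = a}

lemma isDiffSet_coe_iff (D : Finset R) (k l : ℕ) :
    IsDiffSet (D : Set R) k l ↔ #D = k ∧ ∀ a ≠ 0, diffCount D a = l := by
  have hcount (a : R) :
      {z : R × R | z.1 ∈ (D : Set R) ∧ z.2 ∈ (D : Set R) ∧ z.1 - z.2 = a}.ncard =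
        diffCount D a := by
    rw [diffCount, ← Set.ncard_coe_finset]
    congr 1
    ext z
    simp [and_assoc]
  simp only [IsDiffSet, Set.ncard_coe_finset, hcount]

lemma diffCount_zero (D : Finset R) : diffCount D 0 = #D := by
  rw [← D.diag_card, diffCount]
  congr 1
  ext z
  simp only [mem_diag, mem_filter, mem_product, sub_eq_zero]
  grind

variable [Fintype R]

lemma sum_diffCount (D : Finset R) : ∑ a, diffCount D a = #D * #D := by
  rw [← card_product, card_eq_sum_card_fiberwise (fun z _ => mem_univ (z.1 - z.2))]
  rfl

variable {ψ : AddChar R ℂ}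

lemma sum_mul_sum_neg_eq_sum_diffCount (D : Finset R) (c : R) :
    (∑ x ∈ D, ψ (c * x)) * ∑ x ∈ D, ψ (-c * x) = ∑ a, (diffCount D a : ℂ) * ψ (c * a) := by
  rw [sum_mul_sum, ← sum_product', ← sum_fiberwise_of_maps_to (g := fun z => z.1 - z.2)
    (fun z _ => mem_univ _)]
  refine sum_congr rfl fun a _ => ?_
  rw [diffCount, ← nsmul_eq_mul, ← sum_const]
  refine sum_congr rfl fun z hz => ?_
  rw [← AddChar.map_add_eq_mul, ← (mem_filter.1 hz).2]
  ring_nf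

lemma sum_sum_mul_mul_neg_eq_card_mul (hψ : ψ.IsPrimitive) (v : R → ℂ) (b : R) :
    ∑ c, (∑ a, v a * ψ (c * a)) * ψ (-(c * b)) = Fintype.card R * v b := by
  calc _ = ∑ a, v a * ∑ c, ψ (c * (a - b)) := by
          simp_rw [sum_mul, mul_assoc, ← AddChar.map_add_eq_mul, mul_sub, sub_eq_add_neg,
            mul_sum]
          exact sum_comm
    _ = _ := by
          simp_rw [AddChar.sum_mulShift _ hψ, sub_eq_zero]
          simp [mul_comm]

lemma sum_const_add_ite_mul_apply_mul (hψ : ψ.IsPrimitive) (α β : ℂ) (c : R) :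
    ∑ a, (α + if a = 0 then β else 0) * ψ (c * a) =
      (if c = 0 then α * Fintype.card R else 0) + β := by
  simp_rw [add_mul, sum_add_distrib, ← mul_sum, mul_comm c, AddChar.sum_mulShift _ hψ]
  split_ifs <;> simp

lemma eq_of_forall_sum_mul_apply_mul_eq (hψ : ψ.IsPrimitive) {v w : R → ℂ}
    (h : ∀ c, ∑ a, v a * ψ (c * a) = ∑ a, w a * ψ (c * a)) : v = w := by
  funext b
  have hq : (Fintype.card R : ℂ) ≠ 0 := Nat.cast_ne_zero.mpr Fintype.card_ne_zero
  apply mul_left_cancel₀ hq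
  simp_rw [← sum_sum_mul_mul_neg_eq_card_mul hψ, h]

lemma forall_diffCount_eq_iff (hψ : ψ.IsPrimitive) (D : Finset R) (l : ℕ)
    (hD : (#D : ℂ) * (#D - 1) = l * (Fintype.card R - 1)) :
    (∀ a ≠ 0, diffCount D a = l) ↔
      ∀ c ≠ 0, (∑ x ∈ D, ψ (c * x)) * ∑ x ∈ D, ψ (-c * x) = #D - l := by
  simp_rw [sum_mul_sum_neg_eq_sum_diffCount]
  constructor
  · intro h c hc
    have hN (a : R) : (diffCount D a : ℂ) = l + if a = 0 then (#D : ℂ) - l else 0 := by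
      split_ifs with ha
      · simp [ha, diffCount_zero]
      · simp [h a ha]
    simp_rw [hN, sum_const_add_ite_mul_apply_mul hψ, if_neg hc, zero_add]
  · intro h a ha
    have hN := eq_of_forall_sum_mul_apply_mul_eq hψ (v := fun a => (diffCount D a : ℂ))
      (w := fun a => l + if a = 0 then (#D : ℂ) - l else 0) fun c => by
        rw [sum_const_add_ite_mul_apply_mul hψ]
        rcases eq_or_ne c 0 with rfl | hc
        · simp only [zero_mul, AddChar.map_zero_eq_one, mul_one, if_true]
          rw [← Nat.cast_sum, sum_diffCount]
          push_cast
          linear_combination hD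
        · rw [h c hc, if_neg hc, zero_add]
    simpa [ha] using congrFun hN a

end DifferenceSets

section Characters

lemma inv_apply_mul_inv_apply_neg {F : Type*} [Field F] (ν η : MulChar F ℂ) (c : F) :
    (ν * η⁻¹)⁻¹ c * η⁻¹ (-c) = ν⁻¹ c * η (-1) := by
  have h : (ν * η⁻¹)⁻¹ * η⁻¹ = ν⁻¹ := by
    rw [mul_inv_rev, inv_inv, mul_right_comm, mul_inv_cancel, one_mul]
  rw [← neg_one_mul c, map_mul, MulChar.inv_apply' η (-1), inv_neg_one, ← h, MulChar.mul_apply]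
  ring

variable {F : Type*} [Field F] [Fintype F]

lemma mem_Hset_orderOf_iff (χ : MulChar F ℂ) {x : F} (hx : x ≠ 0) :
    x ∈ Hset F (orderOf χ) ↔ χ x = 1 := by
  have hm := χ.orderOf_pos
  constructor
  · rintro ⟨-, y, rfl⟩
    have hy : y ≠ 0 := by rintro rfl; exact hx (zero_pow hm.ne')
    rw [map_pow, ← χ.pow_apply' hm.ne', pow_orderOf_eq_one, MulChar.one_apply hy.isUnit]
  · intro h
    obtain ⟨g, hg⟩ := IsCyclic.exists_generator (α := Fˣ)
    have hord : orderOf (χ g) = orderOf χ := orderOf_eq_orderOf_iff.mpr fun n => by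
      rw [← MulChar.pow_apply_coe, MulChar.eq_iff hg, MulChar.one_apply_coe]
    obtain ⟨n, hn : g ^ n = _⟩ := mem_powers_iff_mem_zpowers.mpr (hg (Units.mk0 x hx))
    have hx' : x = (g : F) ^ n := by rw [← Units.val_pow_eq_pow_val, hn, Units.val_mk0]
    obtain ⟨k, rfl⟩ : orderOf χ ∣ n := by
      rw [← hord, orderOf_dvd_iff_pow_eq_one, ← map_pow, ← hx', h]
    exact ⟨hx, (g : F) ^ k, by rw [hx', ← pow_mul, mul_comm]⟩

open Classical in
lemma sum_zpowers_apply (χ : MulChar F ℂ) [Fintype (Subgroup.zpowers χ)] (x : F) :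
    ∑ η : Subgroup.zpowers χ, (η : MulChar F ℂ) x =
      if x ∈ Hset F (orderOf χ) then (orderOf χ : ℂ) else 0 := by
  rw [sum_zpowers_eq_sum_range (isOfFinOrder_of_finite χ) (fun η => η x)]
  rcases eq_or_ne x 0 with rfl | hx
  · simp [Hset, MulChar.map_zero]
  have hpow (t : ℕ) : (χ ^ t) x = χ x ^ t := χ.pow_apply_coe t (Units.mk0 x hx)
  simp_rw [hpow, mem_Hset_orderOf_iff χ hx]
  split_ifs with h
  · simp [h]
  · rw [geom_sum_eq h, ← hpow, pow_orderOf_eq_one, MulChar.one_apply hx.isUnit, sub_self,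
      zero_div]

lemma sum_apply_mul_apply_mul_eq_gaussSum (η : MulChar F ℂ) (ψ : AddChar F ℂ) {c : F}
    (hc : c ≠ 0) :
    ∑ x, η x * ψ (c * x) = η⁻¹ c * gaussSum η ψ := by
  simpa [gaussSum, AddChar.mulShift_apply] using gaussSum_mulShift_eq η ψ (Units.mk0 c hc)

lemma apply_neg_one_mul_gaussSum_mul_gaussSum_inv {η : MulChar F ℂ} (hη : η ≠ 1)
    {ψ : AddChar F ℂ} (hψ : ψ.IsPrimitive) :
    η (-1) * gaussSum η ψ * gaussSum η⁻¹ ψ = Fintype.card F := by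
  rw [← mul_gaussSum_inv_eq_gaussSum η⁻¹ ψ, ← gaussSum_mul_gaussSum_eq_card hη hψ]
  have h : η (-1) * η⁻¹ (-1) = 1 := by
    rw [← MulChar.mul_apply, mul_inv_cancel, MulChar.one_apply isUnit_one.neg]
  linear_combination (gaussSum η ψ * gaussSum η⁻¹ ψ⁻¹) * h

variable {H : Subgroup (MulChar F ℂ)} [Fintype H] {ψ : AddChar F ℂ}

variable (H ψ) in
/-- The coefficient `B(ν)` of `ν⁻¹(c)` in the expansion of `|H|² S(c) S(-c)`. -/
noncomputable def gaussCoeff (ν : MulChar F ℂ) : ℂ :=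
  Fintype.card H * (1 + ν (-1)) * gaussSum ν ψ +
    ∑ η : H, (η : MulChar F ℂ) (-1) * gaussSum η ψ * gaussSum (ν * (η : MulChar F ℂ)⁻¹) ψ

lemma sum_inv_apply_mul_gaussSum_mul_neg (c : F) :
    (∑ η : H, (η : MulChar F ℂ)⁻¹ c * gaussSum η ψ) *
        ∑ η : H, (η : MulChar F ℂ)⁻¹ (-c) * gaussSum η ψ =
      ∑ ν : H, (ν : MulChar F ℂ)⁻¹ c * ∑ η : H, (η : MulChar F ℂ) (-1) * gaussSum η ψ *
        gaussSum ((ν : MulChar F ℂ) * (η : MulChar F ℂ)⁻¹) ψ := by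
  calc _ = ∑ η : H, ∑ η' : H, (η' : MulChar F ℂ)⁻¹ c * gaussSum η' ψ *
          ((η : MulChar F ℂ)⁻¹ (-c) * gaussSum η ψ) := by
        rw [sum_mul_sum, sum_comm]
    _ = ∑ η : H, ∑ ν : H, ((ν * η⁻¹ : H) : MulChar F ℂ)⁻¹ c * gaussSum (ν * η⁻¹ : H) ψ *
          ((η : MulChar F ℂ)⁻¹ (-c) * gaussSum η ψ) :=
        sum_congr rfl fun η _ => (Equiv.sum_comp (Equiv.mulRight η⁻¹) _).symm
    _ = _ := by
        rw [sum_comm]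
        simp_rw [mul_sum]
        refine sum_congr rfl fun ν _ => sum_congr rfl fun η _ => ?_
        push_cast
        linear_combination (gaussSum (↑ν * (↑η)⁻¹) ψ * gaussSum (↑η) ψ) *
          inv_apply_mul_inv_apply_neg (ν : MulChar F ℂ) η c

lemma gaussCoeff_one (hψ : ψ.IsPrimitive) :
    gaussCoeff H ψ 1 = (Fintype.card H - 1) * Fintype.card F - 2 * Fintype.card H + 1 := by
  have hψ1 : ψ ≠ 1 := by simpa using hψ one_ne_zero
  have hterm (η : H) :
      (η : MulChar F ℂ) (-1) * gaussSum η ψ * gaussSum (1 * (η : MulChar F ℂ)⁻¹) ψ =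
        Fintype.card F + if η = 1 then (1 : ℂ) - Fintype.card F else 0 := by
    split_ifs with h
    · simp [h, gaussSum_one_left hψ1, MulChar.one_apply isUnit_one.neg]
    · rw [one_mul, add_zero]
      exact apply_neg_one_mul_gaussSum_mul_gaussSum_inv (fun h' => h (Subtype.ext h')) hψ
  simp only [gaussCoeff, sum_congr rfl fun η _ => hterm η, sum_add_distrib, sum_const, card_univ,
    sum_ite_eq', mem_univ, if_true, nsmul_eq_mul, gaussSum_one_left hψ1,
    MulChar.one_apply isUnit_one.neg]
  ring

lemma forall_sum_inv_apply_mul_eq_iff (b : MulChar F ℂ → ℂ) :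
    (∀ c ≠ 0, ∑ ν : H, (ν : MulChar F ℂ)⁻¹ c * b ν = b 1) ↔ ∀ ν : H, ν ≠ 1 → b ν = 0 := by
  classical
  constructor
  · intro h ν₀ hν₀
    have hsum : ∑ c, (ν₀ : MulChar F ℂ) c * (∑ ν : H, (ν : MulChar F ℂ)⁻¹ c * b ν - b 1) = 0 := by
      refine sum_eq_zero fun c _ => ?_
      rcases eq_or_ne c 0 with rfl | hc
      · rw [MulChar.map_zero, zero_mul]
      · rw [h c hc, sub_self, mul_zero]
    have horth (ν : H) : ∑ c, (ν₀ : MulChar F ℂ) c * (ν : MulChar F ℂ)⁻¹ c =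
        if ν = ν₀ then (Fintype.card Fˣ : ℂ) else 0 := by
      simp_rw [← MulChar.mul_apply]
      split_ifs with hν
      · rw [hν, mul_inv_cancel, MulChar.sum_one_eq_card_units]
      · refine MulChar.sum_eq_zero_of_ne_one ?_
        rw [Ne, mul_inv_eq_one, eq_comm]
        exact fun h' => hν (Subtype.ext h')
    have hν₀' : ∑ c, (ν₀ : MulChar F ℂ) c = 0 :=
      MulChar.sum_eq_zero_of_ne_one fun h' => hν₀ (Subtype.ext h')
    have hcard : (Fintype.card Fˣ : ℂ) ≠ 0 := Nat.cast_ne_zero.mpr Fintype.card_ne_zero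
    refine (mul_eq_zero.mp ?_).resolve_right hcard
    calc b ν₀ * Fintype.card Fˣ
        = ∑ ν : H, b ν * ∑ c, (ν₀ : MulChar F ℂ) c * (ν : MulChar F ℂ)⁻¹ c := by
          simp [horth]
      _ = ∑ c, (ν₀ : MulChar F ℂ) c * ∑ ν : H, (ν : MulChar F ℂ)⁻¹ c * b ν -
            (∑ c, (ν₀ : MulChar F ℂ) c) * b 1 := by
          rw [hν₀', zero_mul, sub_zero]
          simp_rw [mul_sum]
          rw [sum_comm]
          exact sum_congr rfl fun _ _ => sum_congr rfl fun _ _ => by ring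
      _ = 0 := by
          rw [sum_mul, ← sum_sub_distrib]
          simp_rw [← mul_sub]
          exact hsum
  · intro h c hc
    rw [Fintype.sum_eq_single 1 fun ν hν => by rw [h ν hν, mul_zero]]
    simp [MulChar.one_apply hc.isUnit]

end Characters

section PowerResidues

variable {F : Type*} [Field F] [Fintype F] (χ : MulChar F ℂ) [Fintype (Subgroup.zpowers χ)]

lemma gaussCoeff_zpowers_pow {ψ : AddChar F ℂ} (hψ : ψ ≠ 1) {s : ℕ} (hs1 : 1 ≤ s)
    (hs2 : s ≤ orderOf χ - 1) :
    gaussCoeff (Subgroup.zpowers χ) ψ (χ ^ s) =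
      (orderOf χ - 1) * (1 + (χ ^ s) (-1)) * gaussSum (χ ^ s) ψ +
        ∑ t ∈ (Icc 1 (orderOf χ - 1)).erase s,
          (χ ^ t) (-1) * gaussSum (χ ^ t) ψ * gaussSum (χ ^ ((s : ℤ) - (t : ℤ))) ψ := by
  have hrange : range (orderOf χ) = insert 0 (insert s ((Icc 1 (orderOf χ - 1)).erase s)) := by
    ext t
    simp only [mem_range, mem_insert, mem_erase, mem_Icc]
    omega
  have hsum := sum_zpowers_eq_sum_range (isOfFinOrder_of_finite χ)
    fun η => η (-1) * gaussSum η ψ * gaussSum (χ ^ s * η⁻¹) ψ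
  rw [gaussCoeff, hsum, hrange, sum_insert (by simp; omega), sum_insert (by simp),
    card_zpowers_eq_orderOf]
  simp_rw [zpow_sub, zpow_natCast]
  simp only [pow_zero, inv_one, mul_one, mul_inv_cancel, gaussSum_one_left hψ,
    MulChar.one_apply isUnit_one.neg]
  ring

section

variable [DecidableEq F] [DecidablePred (· ∈ Mset F (orderOf χ))]

lemma ite_mem_Mset_eq (x : F) :
    (if x ∈ Mset F (orderOf χ) then (orderOf χ : ℂ) else 0) =
      (if x = 0 then (orderOf χ : ℂ) else 0) + ∑ η : Subgroup.zpowers χ, (η : MulChar F ℂ) x := by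
  classical
  rw [sum_zpowers_apply]
  rcases eq_or_ne x 0 with rfl | hx
  · simp [Mset, Hset]
  · simp [Mset, hx]

lemma orderOf_mul_card_Mset :
    orderOf χ * #{x | x ∈ Mset F (orderOf χ)} = orderOf χ + Fintype.card Fˣ := by
  have hsum : ∑ η : Subgroup.zpowers χ, ∑ x, (η : MulChar F ℂ) x = Fintype.card Fˣ := by
    rw [Fintype.sum_eq_single 1 fun η hη =>
      MulChar.sum_eq_zero_of_ne_one fun h => hη (Subtype.ext h)]
    exact MulChar.sum_one_eq_card_units
  have key : (orderOf χ : ℂ) * #{x | x ∈ Mset F (orderOf χ)} = orderOf χ + Fintype.card Fˣ := by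
    rw [natCast_card_filter, mul_sum]
    simp_rw [mul_ite, mul_one, mul_zero, ite_mem_Mset_eq, sum_add_distrib, sum_ite_eq', mem_univ,
      if_true]
    rw [sum_comm, hsum]
  exact_mod_cast key

lemma orderOf_mul_sum_Mset (ψ : AddChar F ℂ) {c : F} (hc : c ≠ 0) :
    (orderOf χ : ℂ) * ∑ x ∈ {x | x ∈ Mset F (orderOf χ)}, ψ (c * x) =
      orderOf χ + ∑ η : Subgroup.zpowers χ, (η : MulChar F ℂ)⁻¹ c * gaussSum η ψ := by
  calc (orderOf χ : ℂ) * ∑ x ∈ {x | x ∈ Mset F (orderOf χ)}, ψ (c * x)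
      = ∑ x, (if x ∈ Mset F (orderOf χ) then (orderOf χ : ℂ) else 0) * ψ (c * x) := by
        rw [sum_filter, mul_sum]
        exact sum_congr rfl fun x _ => by split_ifs <;> simp
    _ = orderOf χ + ∑ η : Subgroup.zpowers χ, ∑ x, (η : MulChar F ℂ) x * ψ (c * x) := by
        simp_rw [ite_mem_Mset_eq, add_mul, sum_add_distrib, ite_mul, zero_mul, sum_ite_eq',
          mem_univ, if_true, mul_zero, AddChar.map_zero_eq_one, mul_one, sum_mul]
        rw [sum_comm]
    _ = _ := by simp_rw [sum_apply_mul_apply_mul_eq_gaussSum _ ψ hc]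

lemma orderOf_sq_mul_sum_Mset_mul_sum_Mset (ψ : AddChar F ℂ) {c : F} (hc : c ≠ 0) :
    (orderOf χ : ℂ) ^ 2 * ((∑ x ∈ {x | x ∈ Mset F (orderOf χ)}, ψ (c * x)) *
        ∑ x ∈ {x | x ∈ Mset F (orderOf χ)}, ψ (-c * x)) =
      (orderOf χ : ℂ) ^ 2 + ∑ ν : Subgroup.zpowers χ,
        (ν : MulChar F ℂ)⁻¹ c * gaussCoeff (Subgroup.zpowers χ) ψ ν := by
  have hneg (η : MulChar F ℂ) : η⁻¹ (-c) = η (-1) * η⁻¹ c := by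
    rw [← neg_one_mul c, map_mul, MulChar.inv_apply' η (-1), inv_neg_one]
  have hlin : (orderOf χ : ℂ) * ((∑ η : Subgroup.zpowers χ, (η : MulChar F ℂ)⁻¹ c * gaussSum η ψ) +
      ∑ η : Subgroup.zpowers χ, (η : MulChar F ℂ)⁻¹ (-c) * gaussSum η ψ) =
      ∑ ν : Subgroup.zpowers χ, (ν : MulChar F ℂ)⁻¹ c *
        (orderOf χ * (1 + (ν : MulChar F ℂ) (-1)) * gaussSum ν ψ) := by
    rw [← sum_add_distrib, mul_sum]
    simp_rw [hneg]
    exact sum_congr rfl fun _ _ => by ring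
  calc _ = ((orderOf χ : ℂ) * ∑ x ∈ {x | x ∈ Mset F (orderOf χ)}, ψ (c * x)) *
          ((orderOf χ : ℂ) * ∑ x ∈ {x | x ∈ Mset F (orderOf χ)}, ψ (-c * x)) := by ring
    _ = _ := by
        rw [orderOf_mul_sum_Mset χ ψ hc, orderOf_mul_sum_Mset χ ψ (neg_ne_zero.mpr hc)]
        rw [show ∀ a b b' : ℂ, (a + b) * (a + b') = a ^ 2 + a * (b + b') + b * b' by
          intros; ring, hlin, sum_inv_apply_mul_gaussSum_mul_neg]
        simp only [gaussCoeff, card_zpowers_eq_orderOf, mul_add, sum_add_distrib, add_assoc]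

end

lemma isDiffSet_Mset_iff {ψ : AddChar F ℂ} (hψ : ψ.IsPrimitive) {f l : ℕ}
    (hcard : Fintype.card F = orderOf χ * f + 1) (hlf : f + 1 = l * orderOf χ) :
    IsDiffSet (Mset F (orderOf χ)) (f + 1) l ↔
      ∀ ν : Subgroup.zpowers χ, ν ≠ 1 → gaussCoeff (Subgroup.zpowers χ) ψ ν = 0 := by
  classical
  have hm : (orderOf χ : ℂ) ≠ 0 := Nat.cast_ne_zero.mpr χ.orderOf_pos.ne'
  have hq : (Fintype.card F : ℂ) = orderOf χ * f + 1 := by exact_mod_cast hcard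
  have hl : (f : ℂ) + 1 = l * orderOf χ := by exact_mod_cast hlf
  have hD : #{x | x ∈ Mset F (orderOf χ)} = f + 1 := by
    have h := orderOf_mul_card_Mset χ
    rw [Fintype.card_units, hcard, Nat.add_sub_cancel] at h
    exact Nat.eq_of_mul_eq_mul_left χ.orderOf_pos (h.trans (by ring))
  rw [show Mset F (orderOf χ) = ↑({x | x ∈ Mset F (orderOf χ)} : Finset F) by simp,
    isDiffSet_coe_iff,
    forall_diffCount_eq_iff hψ _ l (by rw [hD, hq]; push_cast; linear_combination (f : ℂ) * hl),
    hD, ← forall_sum_inv_apply_mul_eq_iff, gaussCoeff_one hψ, card_zpowers_eq_orderOf, hq]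
  simp only [true_and]
  refine forall₂_congr fun c hc => ?_
  rw [← mul_right_inj' (pow_ne_zero 2 hm), orderOf_sq_mul_sum_Mset_mul_sum_Mset χ ψ hc]
  push_cast
  constructor <;> intro h
  · linear_combination h + (orderOf χ : ℂ) * hl
  · linear_combination h - (orderOf χ : ℂ) * hl

end PowerResidues

section TraceCharacter

variable (p : ℕ) [Fact p.Prime] (F : Type*) [Field F] [Fintype F] [Algebra (ZMod p) F]

noncomputable def traceChar : AddChar F ℂ :=
  ZMod.stdAddChar.compAddMonoidHom (Algebra.trace (ZMod p) F).toAddMonoidHom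

lemma Gsum_eq_gaussSum (χ : MulChar F ℂ) : Gsum p F χ = gaussSum χ (traceChar p F) := by
  simp [Gsum, gaussSum, traceChar, ZMod.stdAddChar_apply, ZMod.toCircle_apply]

lemma traceChar_ne_one : traceChar p F ≠ 1 := by
  intro h
  obtain ⟨a, ha⟩ := Algebra.trace_surjective (ZMod p) F 1
  have h1 := DFunLike.congr_fun h a
  simp only [traceChar, AddChar.compAddMonoidHom_apply, LinearMap.toAddMonoidHom_coe, ha,
    AddChar.one_apply] at h1
  exact one_ne_zero (ZMod.injective_stdAddChar (h1.trans (AddChar.map_zero_eq_one _).symm))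

end TraceCharacter

theorem stmt5_general (p m f l : ℕ) (hp : p.Prime)
    (F : Type*) [Field F] [Fintype F] [Algebra (ZMod p) F]
    (hcard : Fintype.card F = m * f + 1)
    (hlf : f + 1 = l * m)
    (χ : MulChar F ℂ) (hχ : orderOf χ = m) :
    IsDiffSet (Mset F m) (f + 1) l ↔
      ∀ s : ℕ, 1 ≤ s → s ≤ m - 1 →
        ∑ t ∈ (Finset.Icc 1 (m - 1)).erase s,
            (χ ^ t) (-1) * Gsum p F (χ ^ t) * Gsum p F (χ ^ ((s : ℤ) - (t : ℤ)))
          = (1 - (m : ℂ)) * (1 + (χ ^ s) (-1)) * Gsum p F (χ ^ s) := by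
  classical
  have : Fact p.Prime := ⟨hp⟩
  have := Fintype.ofFinite (Subgroup.zpowers χ)
  subst hχ
  have hψ := traceChar_ne_one p F
  simp only [Gsum_eq_gaussSum]
  rw [isDiffSet_Mset_iff χ (AddChar.IsPrimitive.of_ne_one hψ) hcard hlf]
  refine (forall_zpowers_ne_one_iff (isOfFinOrder_of_finite χ)
    fun ν => gaussCoeff _ (traceChar p F) ν = 0).trans (forall₃_congr fun s hs1 hs2 => ?_)
  rw [gaussCoeff_zpowers_pow χ hψ hs1 hs2]
  constructor <;> intro h <;> linear_combination h

theorem stmt5 (p m f l : ℕ) (hp : p.Prime) (hm : 0 < m) (hf : 0 < f)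
    (F : Type*) [Field F] [Fintype F] [Algebra (ZMod p) F]
    (hq : ∃ n : ℕ, 0 < n ∧ Fintype.card F = p ^ n)
    (hcard : Fintype.card F = m * f + 1)
    (hlf : f + 1 = l * m)
    (χ : MulChar F ℂ) (hχ : orderOf χ = m) :
    IsDiffSet (Mset F m) (f + 1) l ↔
      ∀ s : ℕ, 1 ≤ s → s ≤ m - 1 →
        ∑ t ∈ (Finset.Icc 1 (m - 1)).erase s,
            (χ ^ t) (-1) * Gsum p F (χ ^ t) * Gsum p F (χ ^ ((s : ℤ) - (t : ℤ)))
          = (1 - (m : ℂ)) * (1 + (χ ^ s) (-1)) * Gsum p F (χ ^ s) :=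
  stmt5_general p m f l hp F hcard hlf χ hχ
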